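/- For every p ∈ ℕ₀ and every n ∈ ℕ, one has H_n(−p, 3, 1) = H_n(−p)·H_n(3,1) − B_p·H_n(2,1) − (p/2)·B_{p−1}·H_n(1,1) − C^{(p)}_2(n)·H_n + C^{(p)}_{2,2}(n), where the term (p/2)·B_{p−1} is understood to be 0 when p = 0. -/

import Mathlib

/-- Extended multiple harmonic sum `H_n(k_1,…,k_r) = ∑_{n ≥ n_1 > ⋯ > n_r ≥ 1} 1/(n_1^{k_1} ⋯ n_r^{k_r})`,
with `H_n(∅) = 1`; the exponents may be arbitrary integers.  In particular `Hs n [-(p:ℤ)] = ∑_{m=1}^n m^p`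
and `Hs n [1]` is the `n`-th harmonic number. -/
def Hs : ℕ → List ℤ → ℚ
  | _, [] => 1
  | n, k :: ks => ∑ m ∈ Finset.Icc 1 n, ((m : ℚ) ^ k)⁻¹ * Hs (m - 1) ks

/-- The polynomial `C^{(p)}_{a_2,…,a_r}(x)`, where the list `a = [a_1, a_2, …, a_r]` is the *full*
subscript list including the leading `a_1 = 0` (so `Cpoly p [0]` is `C^{(p)}`, `Cpoly p [0,0]`
is `C^{(p)}_0`, `Cpoly p [0,1,2]` is `C^{(p)}_{1,2}`, …):
`C^{(p)}_{a_2,…,a_r}(x) = ∑_{j_1,…,j_r ≥ 0, j_1+⋯+j_r ≤ p-a_r}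
  (∏_{i=1}^r binom(p+1-a_i-j_1-⋯-j_{i-1}, j_i) B_{j_i} / (p+1-a_i-j_1-⋯-j_{i-1}))
    x^{p+1-a_r-j_1-⋯-j_r}`,
the zero polynomial if `p < a_r`, with `B_j = bernoulli' j`. -/
noncomputable def Cpoly (p : ℕ) (a : List ℕ) : Polynomial ℚ :=
  ∑ j ∈ Fintype.piFinset (fun _ : Fin a.length => Finset.range (p + 1)),
    if (∑ i, j i) + a.getLastD 0 ≤ p then
      Polynomial.C (∏ i : Fin a.length,
        ((p + 1 - a.get i - ∑ i' ∈ Finset.Iio i, j i').choose (j i) : ℚ) * bernoulli' (j i) /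
          ((p + 1 - a.get i - ∑ i' ∈ Finset.Iio i, j i' : ℕ) : ℚ)) *
        Polynomial.X ^ (p + 1 - a.getLastD 0 - ∑ i, j i)
    else 0

section helper

open Finset

noncomputable def cc (N j : ℕ) : ℚ := (N.choose j : ℚ) * bernoulli' j / (N : ℚ)

lemma sum_piFinset_zero {M : Type*} [AddCommMonoid M] (s : Finset ℕ) (f : (Fin 0 → ℕ) → M) :
    ∑ j ∈ Fintype.piFinset (fun _ : Fin 0 => s), f j = f finZeroElim := by
  rw [Fintype.piFinset_of_isEmpty, Finset.univ_unique, Finset.sum_singleton]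
  congr 1

lemma sum_piFinset_succ {M : Type*} [AddCommMonoid M] {r : ℕ} (s : Finset ℕ)
    (f : (Fin (r+1) → ℕ) → M) :
    ∑ j ∈ Fintype.piFinset (fun _ : Fin (r+1) => s), f j
      = ∑ a ∈ s, ∑ j ∈ Fintype.piFinset (fun _ : Fin r => s), f (Fin.cons a j) := by
  have h := Finset.filter_piFinset_eq_map_consEquiv (fun _ : Fin (r+1) => s)
      (fun _ => True)
  simp only [Finset.filter_true] at h
  rw [h, Finset.sum_map, Finset.sum_product]
  rfl

lemma Cpoly0 (q : ℕ) : Cpoly q [0] =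
    ∑ j ∈ range (q+1), Polynomial.C (cc (q+1) j) * Polynomial.X ^ (q+1-j) := by
  rw [Cpoly]
  refine ((sum_piFinset_succ _ _).trans ?_)
  refine Finset.sum_congr rfl fun j hj => ?_
  refine (sum_piFinset_zero _ _).trans ?_
  have h0 : (Finset.Iio (0 : Fin 1)) = ∅ := by decide
  simp [h0, cc, if_pos (Nat.lt_succ_iff.mp (mem_range.mp hj))]

lemma Cpoly02 (p : ℕ) : Cpoly p [0,2] =
    ∑ j0 ∈ range (p+1), ∑ j1 ∈ range (p+1),
      if j0 + j1 + 2 ≤ p then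
        Polynomial.C (cc (p+1) j0 * cc (p-1-j0) j1) * Polynomial.X ^ (p-1-(j0+j1))
      else 0 := by
  rw [Cpoly]
  refine ((sum_piFinset_succ _ _).trans ?_)
  refine Finset.sum_congr rfl fun j0 hj0 => ?_
  refine ((sum_piFinset_succ _ _).trans ?_)
  refine Finset.sum_congr rfl fun j1 hj1 => ?_
  refine (sum_piFinset_zero _ _).trans ?_
  have h0 : (Finset.Iio (0 : Fin 2)) = ∅ := by decide
  have h1 : (Finset.Iio (1 : Fin 2)) = {0} := by decide
  simp [h0, h1, cc]
  refine if_congr Iff.rfl ?_ rfl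
  rw [← Polynomial.C_mul, div_mul_div_comm]

lemma Cpoly022 (p : ℕ) : Cpoly p [0,2,2] =
    ∑ j0 ∈ range (p+1), ∑ j1 ∈ range (p+1), ∑ j2 ∈ range (p+1),
      if j0 + j1 + j2 + 2 ≤ p then
        Polynomial.C (cc (p+1) j0 * cc (p-1-j0) j1 * cc (p-1-(j0+j1)) j2) *
          Polynomial.X ^ (p-1-(j0+j1+j2))
      else 0 := by
  rw [Cpoly]
  refine ((sum_piFinset_succ _ _).trans ?_)
  refine Finset.sum_congr rfl fun j0 hj0 => ?_
  refine ((sum_piFinset_succ _ _).trans ?_)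
  refine Finset.sum_congr rfl fun j1 hj1 => ?_
  refine ((sum_piFinset_succ _ _).trans ?_)
  refine Finset.sum_congr rfl fun j2 hj2 => ?_
  refine (sum_piFinset_zero _ _).trans ?_
  have h0 : (Finset.Iio (0 : Fin 3)) = ∅ := by decide
  have h1 : (Finset.Iio (1 : Fin 3)) = {0} := by decide
  have h2 : (Finset.Iio (2 : Fin 3)) = {0, 1} := by decide
  have hc : Fin.cons (α := fun _ => ℕ) j0 (Fin.cons j1 (Fin.cons j2 finZeroElim)) (2:Fin 3) = j2 := rfl
  simp [h0, h1, h2, cc, Fin.prod_univ_three, Fin.sum_univ_three, hc]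
  refine if_congr Iff.rfl ?_ rfl
  rw [← Polynomial.C_mul, ← Polynomial.C_mul, div_mul_div_comm, div_mul_div_comm]

lemma Cpoly0_eval (q : ℕ) (x : ℚ) : (Cpoly q [0]).eval x =
    ∑ j ∈ range (q+1), cc (q+1) j * x ^ (q+1-j) := by
  rw [Cpoly0, Polynomial.eval_finset_sum]
  simp

lemma Cpoly02_eval (p : ℕ) (x : ℚ) : (Cpoly p [0,2]).eval x =
    ∑ j0 ∈ range (p+1), ∑ j1 ∈ range (p+1),
      if j0 + j1 + 2 ≤ p then cc (p+1) j0 * cc (p-1-j0) j1 * x ^ (p-1-(j0+j1)) else 0 := by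
  rw [Cpoly02, Polynomial.eval_finset_sum]
  refine Finset.sum_congr rfl fun j0 _ => ?_
  rw [Polynomial.eval_finset_sum]
  refine Finset.sum_congr rfl fun j1 _ => ?_
  rw [apply_ite (Polynomial.eval x)]
  simp

lemma Cpoly022_eval (p : ℕ) (x : ℚ) : (Cpoly p [0,2,2]).eval x =
    ∑ j0 ∈ range (p+1), ∑ j1 ∈ range (p+1), ∑ j2 ∈ range (p+1),
      if j0 + j1 + j2 + 2 ≤ p then
        cc (p+1) j0 * cc (p-1-j0) j1 * cc (p-1-(j0+j1)) j2 * x ^ (p-1-(j0+j1+j2))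
      else 0 := by
  rw [Cpoly022, Polynomial.eval_finset_sum]
  refine Finset.sum_congr rfl fun j0 _ => ?_
  rw [Polynomial.eval_finset_sum]
  refine Finset.sum_congr rfl fun j1 _ => ?_
  rw [Polynomial.eval_finset_sum]
  refine Finset.sum_congr rfl fun j2 _ => ?_
  rw [apply_ite (Polynomial.eval x)]
  simp

lemma faulhaber (q n : ℕ) : (Cpoly q [0]).eval (n:ℚ) = ∑ m ∈ Icc 1 n, (m:ℚ)^q := by
  rw [Cpoly0_eval, ← Finset.Ico_add_one_right_eq_Icc, sum_Ico_pow]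
  refine Finset.sum_congr rfl fun j hj => ?_
  rw [cc]
  push_cast
  ring

lemma key2 (p m : ℕ) (hm : 1 ≤ m) :
    (Cpoly p [0]).eval (m:ℚ) / (m:ℚ)^3 - bernoulli' p / (m:ℚ)^2
        - (p:ℚ)/2 * bernoulli' (p-1) / (m:ℚ)
    = ∑ j ∈ range (p+1), if j + 2 ≤ p then cc (p+1) j * (m:ℚ)^(p-2-j) else 0 := by
  have hm0 : (m:ℚ) ≠ 0 := by positivity
  rw [Cpoly0_eval]
  rcases p with _ | _ | q
  · norm_num [cc]
    field_simp
    ring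
  · norm_num [cc, Finset.sum_range_succ]
    field_simp
    ring
  · have hcc2 : cc (q+3) (q+2) = bernoulli' (q+2) := by
      have h : (q+3).choose (q+2) = q+3 := by
        rw [show q+2 = (q+3)-1 from rfl, Nat.choose_symm (by omega), Nat.choose_one_right]
      rw [cc, h]
      field_simp
    have hcc1 : cc (q+3) (q+1) = ((q:ℚ)+2)/2 * bernoulli' (q+1) := by
      have h : (q+3).choose (q+1) * 2 = (q+3)*(q+2) := by
        have hs : (q+3).choose (q+1) = (q+3).choose 2 := by
          rw [show q+1 = (q+3)-2 from rfl, Nat.choose_symm (by omega)]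
        have hd : 2 ∣ (q+3) * (q+2) := by
          rw [mul_comm]
          exact (Nat.even_mul_succ_self (q+2)).two_dvd
        rw [hs, Nat.choose_two_right, show q+3-1 = q+2 from rfl, Nat.div_mul_cancel hd]
      have hq : ((q+3).choose (q+1) : ℚ) * 2 = ((q:ℚ)+3)*((q:ℚ)+2) := by
        exact_mod_cast congrArg (Nat.cast : ℕ → ℚ) h
      rw [cc]
      have h3 : ((q:ℚ)+3) ≠ 0 := by positivity
      push_cast
      field_simp
      linear_combination bernoulli' (q+1) * hq
    have hsplit : (∑ j ∈ range (q+2+1), cc (q+3) j * (m:ℚ)^(q+2+1-j))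
        = (∑ j ∈ range (q+1), cc (q+3) j * (m:ℚ)^(q+3-j))
          + cc (q+3) (q+1) * (m:ℚ)^2 + cc (q+3) (q+2) * (m:ℚ) := by
      rw [Finset.sum_range_succ, Finset.sum_range_succ,
        show q+2+1-(q+1) = 2 from by omega, show q+2+1-(q+2) = 1 from by omega, pow_one]
    have hR : (∑ j ∈ range (q+2+1), if j + 2 ≤ q+2 then cc (q+2+1) j * (m:ℚ)^(q+2-2-j) else 0)
        = ∑ j ∈ range (q+1), cc (q+3) j * (m:ℚ)^(q-j) := by
      rw [Finset.sum_range_succ, Finset.sum_range_succ, if_neg (by omega), if_neg (by omega),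
        add_zero, add_zero]
      refine Finset.sum_congr rfl fun j hj => ?_
      rw [if_pos (by have := mem_range.mp hj; omega), show q+2-2-j = q-j from by omega]
    rw [hsplit, hR, hcc1, hcc2]
    have hterm : ∀ j ∈ range (q+1), cc (q+3) j * (m:ℚ)^(q+3-j)
        = cc (q+3) j * (m:ℚ)^(q-j) * (m:ℚ)^3 := by
      intro j hj
      rw [show q+3-j = (q-j)+3 from by (have := mem_range.mp hj; omega), pow_add]
      ring
    rw [Finset.sum_congr rfl hterm, ← Finset.sum_mul]
    push_cast
    field_simp
    ring

lemma E2 (p n : ℕ) : (Cpoly p [0,2]).eval (n:ℚ)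
    = ∑ m ∈ Icc 1 n, ((Cpoly p [0]).eval (m:ℚ) / (m:ℚ)^3 - bernoulli' p / (m:ℚ)^2
        - (p:ℚ)/2 * bernoulli' (p-1) / (m:ℚ)) := by
  rw [Finset.sum_congr rfl (fun m hm => key2 p m (Finset.mem_Icc.mp hm).1), Finset.sum_comm,
    Cpoly02_eval]
  refine Finset.sum_congr rfl fun j0 hj0 => ?_
  by_cases hc : j0 + 2 ≤ p
  · simp only [if_pos hc]
    rw [← Finset.mul_sum, ← faulhaber (p-2-j0) n, Cpoly0_eval, Finset.mul_sum]
    refine Eq.trans ((Finset.sum_subset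
        (Finset.range_subset_range.mpr (show p-2-j0+1 ≤ p+1 from by omega))
        (fun j1 _ hj1 => if_neg (by have := Finset.mem_range.not.mp hj1; omega))).symm)
      (Finset.sum_congr rfl fun j1 hj1 => ?_)
    have hj1' := Finset.mem_range.mp hj1
    rw [if_pos (by omega), show p-2-j0+1 = p-1-j0 from by omega, Nat.sub_sub (p-1) j0 j1]
    ring
  · simp only [if_neg hc]
    rw [Finset.sum_const_zero]
    exact Finset.sum_eq_zero fun j1 _ => if_neg (by omega)

lemma key3 (p m : ℕ) (hm : 1 ≤ m) :
    (Cpoly p [0,2]).eval (m:ℚ) / (m:ℚ)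
    = ∑ j0 ∈ range (p+1), ∑ j1 ∈ range (p+1),
        if j0 + j1 + 2 ≤ p then cc (p+1) j0 * cc (p-1-j0) j1 * (m:ℚ)^(p-2-(j0+j1)) else 0 := by
  have hm0 : (m:ℚ) ≠ 0 := by positivity
  rw [Cpoly02_eval, Finset.sum_div]
  refine Finset.sum_congr rfl fun j0 _ => ?_
  rw [Finset.sum_div]
  refine Finset.sum_congr rfl fun j1 _ => ?_
  by_cases hc : j0 + j1 + 2 ≤ p
  · rw [if_pos hc, if_pos hc, show p-1-(j0+j1) = (p-2-(j0+j1))+1 from by omega, pow_succ]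
    field_simp
  · rw [if_neg hc, if_neg hc, zero_div]

lemma E3 (p n : ℕ) : (Cpoly p [0,2,2]).eval (n:ℚ)
    = ∑ m ∈ Icc 1 n, (Cpoly p [0,2]).eval (m:ℚ) / (m:ℚ) := by
  rw [Finset.sum_congr rfl (fun m hm => key3 p m (Finset.mem_Icc.mp hm).1), Finset.sum_comm,
    Cpoly022_eval]
  refine Finset.sum_congr rfl fun j0 hj0 => ?_
  conv_rhs => rw [Finset.sum_comm]
  refine Finset.sum_congr rfl fun j1 hj1 => ?_
  by_cases hc : j0 + j1 + 2 ≤ p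
  · have : ∀ m ∈ Icc 1 n, (if j0 + j1 + 2 ≤ p then
        cc (p+1) j0 * cc (p-1-j0) j1 * (m:ℚ)^(p-2-(j0+j1)) else 0)
        = cc (p+1) j0 * cc (p-1-j0) j1 * (m:ℚ)^(p-2-(j0+j1)) := fun m _ => if_pos hc
    rw [Finset.sum_congr rfl this, ← Finset.mul_sum, ← faulhaber (p-2-(j0+j1)) n, Cpoly0_eval,
      Finset.mul_sum]
    refine Eq.trans ((Finset.sum_subset
        (Finset.range_subset_range.mpr (show p-2-(j0+j1)+1 ≤ p+1 from by omega))
        (fun j2 _ hj2 => if_neg (by have := Finset.mem_range.not.mp hj2; omega))).symm)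
      (Finset.sum_congr rfl fun j2 hj2 => ?_)
    have hj2' := Finset.mem_range.mp hj2
    rw [if_pos (by omega), show p-2-(j0+j1)+1 = p-1-(j0+j1) from by omega,
      Nat.sub_sub (p-1) (j0+j1) j2, show j0+j1+j2 = (j0+j1)+j2 from rfl]
    ring
  · simp only [if_neg hc]
    rw [Finset.sum_const_zero]
    exact Finset.sum_eq_zero fun j2 _ => if_neg (by omega)

lemma Hs_zero (k : ℤ) (ks : List ℤ) : Hs 0 (k::ks) = 0 := by
  simp [Hs]

lemma Hs_succ (n : ℕ) (k : ℤ) (ks : List ℤ) :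
    Hs (n+1) (k::ks) = Hs n (k::ks) + (((n+1:ℕ):ℚ)^k)⁻¹ * Hs n ks := by
  simp only [Hs]
  rw [Finset.sum_Icc_succ_top (by omega : 1 ≤ n+1)]
  norm_num

lemma Hs_neg (p n : ℕ) : Hs n [-(p:ℤ)] = ∑ m ∈ Icc 1 n, (m:ℚ)^p := by
  simp [Hs, zpow_neg, zpow_natCast]

theorem main' (p : ℕ) : ∀ n : ℕ,
    Hs n [-(p : ℤ), 3, 1] =
      Hs n [-(p : ℤ)] * Hs n [3, 1] - bernoulli' p * Hs n [2, 1]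
        - (p : ℚ) / 2 * bernoulli' (p - 1) * Hs n [1, 1]
        - (Cpoly p [0, 2]).eval (n : ℚ) * Hs n [1] + (Cpoly p [0, 2, 2]).eval (n : ℚ) := by
  intro n
  induction n with
  | zero =>
    rw [E2, E3]
    simp [Hs_zero]
  | succ n ih =>
    have hN : ((n+1:ℕ):ℚ) ≠ 0 := by positivity
    have hzp : ((((n+1:ℕ):ℚ))^(-(p:ℤ)))⁻¹ = ((n+1:ℕ):ℚ)^p := by
      rw [zpow_neg, inv_inv, zpow_natCast]
    have hA : Hs (n+1) [-(p:ℤ)] = Hs n [-(p:ℤ)] + ((n+1:ℕ):ℚ)^p := by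
      rw [Hs_succ, hzp]; simp [Hs]
    have h31 : Hs (n+1) [3,1] = Hs n [3,1] + (((n+1:ℕ):ℚ)^3)⁻¹ * Hs n [1] := by
      rw [Hs_succ, show ((3:ℤ)) = ((3:ℕ):ℤ) from rfl, zpow_natCast]
    have h21 : Hs (n+1) [2,1] = Hs n [2,1] + (((n+1:ℕ):ℚ)^2)⁻¹ * Hs n [1] := by
      rw [Hs_succ, show ((2:ℤ)) = ((2:ℕ):ℤ) from rfl, zpow_natCast]
    have h11 : Hs (n+1) [1,1] = Hs n [1,1] + (((n+1:ℕ):ℚ))⁻¹ * Hs n [1] := by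
      rw [Hs_succ, zpow_one]
    have h1 : Hs (n+1) [1] = Hs n [1] + (((n+1:ℕ):ℚ))⁻¹ := by
      rw [Hs_succ]; norm_num [Hs]
    have hmain : Hs (n+1) [-(p:ℤ),3,1] = Hs n [-(p:ℤ),3,1] + ((n+1:ℕ):ℚ)^p * Hs n [3,1] := by
      rw [Hs_succ, hzp]
    have hF : (Cpoly p [0]).eval ((n+1:ℕ):ℚ) = Hs (n+1) [-(p:ℤ)] := by
      rw [faulhaber, Hs_neg]
    have hP : (Cpoly p [0,2]).eval ((n+1:ℕ):ℚ) = (Cpoly p [0,2]).eval (n:ℚ)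
        + (Hs (n+1) [-(p:ℤ)] / ((n+1:ℕ):ℚ)^3 - bernoulli' p / ((n+1:ℕ):ℚ)^2
            - (p:ℚ)/2 * bernoulli' (p-1) / ((n+1:ℕ):ℚ)) := by
      rw [E2, E2, Finset.sum_Icc_succ_top (by omega : 1 ≤ n+1), hF]
    have hQ : (Cpoly p [0,2,2]).eval ((n+1:ℕ):ℚ) = (Cpoly p [0,2,2]).eval (n:ℚ)
        + (Cpoly p [0,2]).eval ((n+1:ℕ):ℚ) / ((n+1:ℕ):ℚ) := by
      rw [E3, E3, Finset.sum_Icc_succ_top (by omega : 1 ≤ n+1)]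
    rw [hmain, ih, hA, h31, h21, h11, h1, hQ, hP, hA]
    field_simp
    ring

end helper

/-- `H_n(−p,3,1) = H_n(−p)·H_n(3,1) − B_p·H_n(2,1) − (p/2)·B_{p−1}·H_n(1,1)
− C^{(p)}_2(n)·H_n + C^{(p)}_{2,2}(n)`;
the factor `(p/2)·B_{p−1}` is `0` when `p = 0` because of the factor `p`. -/
theorem stmt_16 (p : ℕ) (n : ℕ) (hn : 0 < n) :
    Hs n [-(p : ℤ), 3, 1] =
      Hs n [-(p : ℤ)] * Hs n [3, 1] - bernoulli' p * Hs n [2, 1]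
        - (p : ℚ) / 2 * bernoulli' (p - 1) * Hs n [1, 1]
        - (Cpoly p [0, 2]).eval (n : ℚ) * Hs n [1] + (Cpoly p [0, 2, 2]).eval (n : ℚ) :=
  main' p n
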